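/- Let f : ℝ^d → ℝ be convex, twice continuously differentiable, attain its minimum f⋆, be L-smooth (∇²f(x) ⪯ L·I for all x), and have M-Lipschitz Hessian (|uᵀ(∇²f(x) − ∇²f(y))u| ≤ M‖x−y‖‖u‖² for all x, y, u). Fix x ∈ ℝ^d, a unit vector u, R > 0, and set B = max(LR², MR³, f(x) − f⋆). Let d₀ = uᵀ∇f(x), h₀ = uᵀ∇²f(x)u, and for 0 < r ≤ R let d_r = d_r(x;u), h_r = h_r(x;u) be the central finite differences. Let P(α) = d₀α + (h₀/2)α² + (M/6)|α|³, let α̂ = φ(d₀, h₀) be its global minimizer, and let α⁺ = φ(d_r, h_r), α⁻ = φ(−d_r, h_r), where φ(d,h) = −2d/(h + √(h² + 2M|d|)) (with φ(0,0) = 0). Then min(|P(α̂) − P(α⁺)|, |P(α̂) − P(α⁻)|) ≤ (2B/R²)·r². -/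

import Mathlib

/-!
Restricted to the line `t ↦ x + t • u`, `f` becomes a convex function `g` with `g'' ≤ L` and
`M`-Lipschitz `g''`. Taylor's formula then gives `|d_r - d₀| ≤ M r² / 6` and
`|h_r - h₀| ≤ M r / 3`, convexity gives `h_r, h₀ ≥ 0`, and the step `-d₀ / L` gives
`d₀² ≤ 2 L (f x - f⋆)`, so `d₀² R² ≤ 2 B²`.

One of `α⁺`, `α⁻ = -α⁺` points downhill for `P`; there `P` is the half-line model
`t ↦ -|d₀| t + h₀ t² / 2 + M t³ / 6`, evaluated at the minimiser `t'` of the same model with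
the finite-difference coefficients, while `P(α̂)` is its value at its own minimiser `t`. Since
`t'` minimises the perturbed model, the excess is at most `|t' - t|` times the coefficient error
`O(r (r + max(t, t')))`; comparing the first-order conditions at `t` and `t'` bounds
`(M/2) max(t, t') |t' - t|` by the same error. Together the excess is at most
`(M/2) r² max(r, t, t')`, and `M t² ≤ 2|d₀|` gives `M max(t, t') R² ≤ 4B`.
-/

open scoped RealInnerProductSpace

/-- The one-dimensional cubic-regularized second-order model
`P(α; d, h) = d·α + (h/2)·α² + (M/6)·|α|³`. -/
noncomputable def cubicModel (M d h α : ℝ) : ℝ :=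
  d * α + h / 2 * α ^ 2 + M / 6 * |α| ^ 3

/-- The global minimizer `φ(d, h) = −2d/(h + √(h² + 2M|d|))` of the cubic model
(understood as `0` when `d = 0` and `h = 0`). -/
noncomputable def cubicMin (M d h : ℝ) : ℝ :=
  -2 * d / (h + Real.sqrt (h ^ 2 + 2 * M * |d|))

/-- First-order central finite difference `d_r(x;u) = (f(x+ru) − f(x−ru))/(2r)`. -/
noncomputable def centralD {n : ℕ} (f : EuclideanSpace ℝ (Fin n) → ℝ)
    (x u : EuclideanSpace ℝ (Fin n)) (r : ℝ) : ℝ :=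
  (f (x + r • u) - f (x - r • u)) / (2 * r)

/-- Second-order central finite difference `h_r(x;u) = (f(x+ru) − 2f(x) + f(x−ru))/r²`. -/
noncomputable def centralH {n : ℕ} (f : EuclideanSpace ℝ (Fin n) → ℝ)
    (x u : EuclideanSpace ℝ (Fin n)) (r : ℝ) : ℝ :=
  (f (x + r • u) - 2 * f x + f (x - r • u)) / r ^ 2

section CubicModel

variable {M d h : ℝ}

theorem cubicModel_neg (M d h α : ℝ) : cubicModel M (-d) h (-α) = cubicModel M d h α := by
  simp only [cubicModel, abs_neg]
  ring

theorem cubicMin_neg (M d h : ℝ) : cubicMin M (-d) h = -cubicMin M d h := by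
  simp only [cubicMin, abs_neg]
  ring

theorem cubicMin_nonneg (hd : d ≤ 0) (hh : 0 ≤ h) : 0 ≤ cubicMin M d h :=
  div_nonneg (by linarith) (by positivity)

theorem cubicMin_stationary (hM : 0 < M) (hd : d ≤ 0) (hh : 0 ≤ h) :
    d + h * cubicMin M d h + M / 2 * cubicMin M d h ^ 2 = 0 := by
  set S := Real.sqrt (h ^ 2 + 2 * M * |d|) with hS
  have hS0 : 0 ≤ S := Real.sqrt_nonneg _
  have hS2 : S ^ 2 = h ^ 2 - 2 * M * d := by
    rw [hS, Real.sq_sqrt (by positivity), abs_of_nonpos hd]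
    ring
  rcases eq_or_lt_of_le (add_nonneg hh hS0) with hden | hden
  · have hd0 : d = 0 := by nlinarith
    simp [cubicMin, hd0]
  · simp only [cubicMin, ← hS]
    field_simp
    linear_combination d * hS2

theorem sq_cubicMin_le (hM : 0 < M) (hd : d ≤ 0) (hh : 0 ≤ h) :
    M * cubicMin M d h ^ 2 ≤ -2 * d := by
  nlinarith [cubicMin_stationary hM hd hh, mul_nonneg hh (cubicMin_nonneg (M := M) hd hh)]

theorem cubicModel_sub_cubicModel_cubicMin (hM : 0 < M) (hd : d ≤ 0) (hh : 0 ≤ h) {s : ℝ}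
    (hs : 0 ≤ s) :
    cubicModel M d h s - cubicModel M d h (cubicMin M d h) =
      (s - cubicMin M d h) ^ 2 * (h / 2 + M / 6 * (s + 2 * cubicMin M d h)) := by
  have hstat := cubicMin_stationary hM hd hh
  simp only [cubicModel, abs_of_nonneg hs, abs_of_nonneg (cubicMin_nonneg (M := M) hd hh)]
  linear_combination (s - cubicMin M d h) * hstat

theorem cubicModel_cubicMin_le (hM : 0 < M) (hh : 0 ≤ h) (α : ℝ) :
    cubicModel M d h (cubicMin M d h) ≤ cubicModel M d h α := by
  suffices key : ∀ d ≤ 0, ∀ α, cubicModel M d h (cubicMin M d h) ≤ cubicModel M d h α by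
    rcases le_total d 0 with hd | hd
    · exact key d hd α
    · simpa only [cubicMin_neg, cubicModel_neg, neg_neg] using key (-d) (by linarith) (-α)
  intro d hd α
  have hfold : cubicModel M d h |α| ≤ cubicModel M d h α := by
    simp only [cubicModel, abs_abs, sq_abs]
    nlinarith [mul_le_mul_of_nonpos_left (le_abs_self α) hd]
  have hs := cubicModel_sub_cubicModel_cubicMin hM hd hh (abs_nonneg α)
  have := cubicMin_nonneg (M := M) hd hh
  nlinarith [mul_nonneg (sq_nonneg (|α| - cubicMin M d h))
    (by positivity : 0 ≤ h / 2 + M / 6 * (|α| + 2 * cubicMin M d h))]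

theorem mul_cubicMin_nonpos (hh : 0 ≤ h) : d * cubicMin M d h ≤ 0 := by
  have : 0 ≤ 2 * d ^ 2 / (h + Real.sqrt (h ^ 2 + 2 * M * |d|)) := by positivity
  rw [cubicMin]
  linarith [show d * (-2 * d / (h + Real.sqrt (h ^ 2 + 2 * M * |d|))) =
    -(2 * d ^ 2 / (h + Real.sqrt (h ^ 2 + 2 * M * |d|))) by ring]

theorem abs_cubicMin (hh : 0 ≤ h) : |cubicMin M d h| = cubicMin M (-|d|) h := by
  have : 0 ≤ h + Real.sqrt (h ^ 2 + 2 * M * |d|) := by positivity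
  rw [cubicMin, cubicMin, abs_div, abs_of_nonneg this, abs_mul]
  simp only [abs_neg, abs_abs, abs_two]
  ring

theorem cubicModel_of_mul_nonpos {α : ℝ} (hdα : d * α ≤ 0) :
    cubicModel M d h α = cubicModel M (-|d|) h |α| := by
  have : d * α = -(|d| * |α|) := by rw [← abs_mul, abs_of_nonpos hdα, neg_neg]
  simp only [cubicModel, abs_abs, sq_abs]
  linarith

end CubicModel

section Perturbation

variable {M d d' h h' r : ℝ}

theorem cubicModel_cubicMin_sub_le (hM : 0 < M) (hd : d ≤ 0) (hd' : d' ≤ 0) (hh : 0 ≤ h)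
    (hh' : 0 ≤ h') :
    cubicModel M d h (cubicMin M d' h') - cubicModel M d h (cubicMin M d h) ≤
      |cubicMin M d' h' - cubicMin M d h| *
        (|d' - d| + |h' - h| * max (cubicMin M d h) (cubicMin M d' h')) := by
  have ht := cubicMin_nonneg (M := M) hd hh
  have ht' := cubicMin_nonneg (M := M) hd' hh'
  set t := cubicMin M d h
  set t' := cubicMin M d' h'
  -- `t'` minimises the perturbed model, which differs from `P` by a quadratic polynomial.
  have hmin := cubicModel_cubicMin_le (d := d') hM hh' t
  have hX : cubicModel M d h t' - cubicModel M d h t ≤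
      (t' - t) * (d - d' + (h - h') / 2 * (t' + t)) := by
    simp only [cubicModel] at hmin ⊢
    linear_combination hmin
  refine hX.trans <| (le_abs_self _).trans ?_
  rw [abs_mul]
  gcongr
  calc |d - d' + (h - h') / 2 * (t' + t)| ≤ |d' - d| + |h' - h| / 2 * (t' + t) := by
        refine (abs_add_le _ _).trans (add_le_add (abs_sub_comm d d').le (le_of_eq ?_))
        rw [abs_mul, abs_div, abs_sub_comm h h', abs_two,
          abs_of_nonneg (by linarith : 0 ≤ t' + t)]
    _ ≤ |d' - d| + |h' - h| * max t t' := by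
        have : t' + t ≤ 2 * max t t' := by linarith [le_max_left t t', le_max_right t t']
        nlinarith [mul_le_mul_of_nonneg_left this (abs_nonneg (h' - h))]

theorem max_cubicMin_mul_abs_sub_le (hM : 0 < M) (hd : d ≤ 0) (hd' : d' ≤ 0) (hh : 0 ≤ h)
    (hh' : 0 ≤ h') :
    M / 2 * max (cubicMin M d h) (cubicMin M d' h') * |cubicMin M d' h' - cubicMin M d h| ≤
      |d' - d| + |h' - h| * max (cubicMin M d h) (cubicMin M d' h') := by
  have ht := cubicMin_nonneg (M := M) hd hh
  have ht' := cubicMin_nonneg (M := M) hd' hh'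
  have hid : (cubicMin M d' h' - cubicMin M d h) *
      (h + M / 2 * (cubicMin M d' h' + cubicMin M d h)) = d - d' - (h' - h) * cubicMin M d' h' := by
    linear_combination cubicMin_stationary hM hd' hh' - cubicMin_stationary hM hd hh
  set t := cubicMin M d h
  set t' := cubicMin M d' h'
  have hT : max t t' ≤ t' + t := max_le (by linarith) (by linarith)
  have habs : |t' - t| * (h + M / 2 * (t' + t)) = |d - d' - (h' - h) * t'| := by
    rw [← hid, abs_mul, abs_of_nonneg (by positivity : 0 ≤ h + M / 2 * (t' + t))]
  have : |d - d' - (h' - h) * t'| ≤ |d' - d| + |h' - h| * max t t' := by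
    refine (abs_sub _ _).trans (add_le_add (abs_sub_comm d d').le ?_)
    rw [abs_mul, abs_of_nonneg ht']
    gcongr
    exact le_max_right t t'
  nlinarith [abs_nonneg (t' - t), mul_le_mul_of_nonneg_left hT (abs_nonneg (t' - t))]

theorem cubicModel_cubicMin_sub_le_of_abs_le (hM : 0 < M) (hd : d ≤ 0) (hd' : d' ≤ 0)
    (hh : 0 ≤ h) (hh' : 0 ≤ h') (hr : 0 ≤ r) (hdd : |d' - d| ≤ M * r ^ 2 / 6)
    (hhh : |h' - h| ≤ M * r / 3) :
    cubicModel M d h (cubicMin M d' h') - cubicModel M d h (cubicMin M d h) ≤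
      M / 2 * r ^ 2 * max r (max (cubicMin M d h) (cubicMin M d' h')) := by
  have hX := cubicModel_cubicMin_sub_le hM hd hd' hh hh'
  have hgapT := max_cubicMin_mul_abs_sub_le hM hd hd' hh hh'
  have ht := cubicMin_nonneg (M := M) hd hh
  have ht' := cubicMin_nonneg (M := M) hd' hh'
  set t := cubicMin M d h
  set t' := cubicMin M d' h'
  set T := max t t'
  have hT : 0 ≤ T := le_max_of_le_left ht
  have hgap : |t' - t| ≤ T :=
    abs_sub_le_iff.2 ⟨by linarith [le_max_right t t'], by linarith [le_max_left t t']⟩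
  have hK : |d' - d| + |h' - h| * T ≤ M * r * (r + 2 * T) / 6 := by
    nlinarith [mul_le_mul_of_nonneg_right hhh hT]
  rcases le_or_gt T r with hTr | hrT
  · rw [max_eq_left hTr]
    have hKr : M * r * (r + 2 * T) / 6 ≤ M * r ^ 2 / 2 := by
      nlinarith [mul_le_mul_of_nonneg_left hTr (by positivity : 0 ≤ M * r)]
    calc _ ≤ |t' - t| * (|d' - d| + |h' - h| * T) := hX
      _ ≤ r * (M * r ^ 2 / 2) := mul_le_mul (hgap.trans hTr) (hK.trans hKr) (by positivity) hr
      _ = M / 2 * r ^ 2 * r := by ring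
  · rw [max_eq_right hrT.le]
    have hKT : M * r * (r + 2 * T) / 6 ≤ M * r * T / 2 := by
      nlinarith [mul_le_mul_of_nonneg_left hrT.le (by positivity : 0 ≤ M * r)]
    have hTpos : 0 < M / 2 * T := mul_pos (by positivity) (by linarith)
    refine le_of_mul_le_mul_right ?_ hTpos
    calc (cubicModel M d h t' - cubicModel M d h t) * (M / 2 * T)
        ≤ (M / 2 * T * |t' - t|) * (|d' - d| + |h' - h| * T) := by nlinarith
      _ ≤ (M * r * T / 2) * (M * r * T / 2) := by
          gcongr
          · exact hgapT.trans (hK.trans hKT)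
          · exact hK.trans hKT
      _ = M / 2 * r ^ 2 * T * (M / 2 * T) := by ring

end Perturbation

section Scale

variable {M d d' h h' r R B : ℝ}

theorem cubicModel_cubicMin_sub_le_mul_sq (hM : 0 < M) (hd : d ≤ 0) (hd' : d' ≤ 0)
    (hh : 0 ≤ h) (hh' : 0 ≤ h') (hr : 0 < r) (hrR : r ≤ R) (hMB : M * R ^ 3 ≤ B)
    (hdB : d ^ 2 * R ^ 2 ≤ 2 * B ^ 2) (hdd : |d' - d| ≤ M * r ^ 2 / 6)
    (hhh : |h' - h| ≤ M * r / 3) :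
    cubicModel M d h (cubicMin M d' h') - cubicModel M d h (cubicMin M d h) ≤
      2 * B / R ^ 2 * r ^ 2 := by
  have hR : 0 < R := hr.trans_le hrR
  have hB : 0 ≤ B := (by positivity : 0 ≤ M * R ^ 3).trans hMB
  set T := max (cubicMin M d h) (cubicMin M d' h') with hTdef
  have hT : M * T ^ 2 ≤ -2 * d + M * r ^ 2 / 3 := by
    have := (abs_le.1 hdd).1
    rcases max_cases (cubicMin M d h) (cubicMin M d' h') with ⟨hmax, -⟩ | ⟨hmax, -⟩ <;>
      rw [hTdef, hmax]
    · linarith [sq_cubicMin_le hM hd hh, (by positivity : 0 ≤ M * r ^ 2)]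
    · linarith [sq_cubicMin_le hM hd' hh']
  have hdR : -d * R ≤ 2 * B := by nlinarith
  have hTR : M * T * R ^ 2 ≤ 4 * B := by
    have hr2 : M * r ^ 2 * (M * R ^ 4) ≤ B ^ 2 := by
      have : r ^ 2 ≤ R ^ 2 := pow_le_pow_left₀ hr.le hrR 2
      nlinarith [mul_le_mul hMB hMB (by positivity) hB,
        mul_le_mul_of_nonneg_left this (by positivity : 0 ≤ M ^ 2 * R ^ 4)]
    have : (M * T * R ^ 2) ^ 2 ≤ (4 * B) ^ 2 := by
      nlinarith [mul_le_mul_of_nonneg_right hT (by positivity : 0 ≤ M * R ^ 4),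
        mul_le_mul hdR hMB (by positivity) (by positivity)]
    nlinarith
  have hrR' : M * r * R ^ 2 ≤ 4 * B := by
    nlinarith [mul_le_mul_of_nonneg_left hrR (by positivity : 0 ≤ M * R ^ 2)]
  have hmax : M * max r T * R ^ 2 ≤ 4 * B := by
    rcases max_cases r T with ⟨hm, -⟩ | ⟨hm, -⟩ <;> rw [hm] <;> assumption
  have := cubicModel_cubicMin_sub_le_of_abs_le hM hd hd' hh hh' hr.le hdd hhh
  rw [div_mul_eq_mul_div, le_div_iff₀ (by positivity)]
  nlinarith [mul_le_mul_of_nonneg_left hmax (by positivity : 0 ≤ r ^ 2)]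

theorem min_abs_cubicModel_sub_le (hM : 0 < M) (hh : 0 ≤ h) (hh' : 0 ≤ h') (hr : 0 < r)
    (hrR : r ≤ R) (hMB : M * R ^ 3 ≤ B) (hdB : d ^ 2 * R ^ 2 ≤ 2 * B ^ 2)
    (hdd : |d' - d| ≤ M * r ^ 2 / 6) (hhh : |h' - h| ≤ M * r / 3) :
    min |cubicModel M d h (cubicMin M d h) - cubicModel M d h (cubicMin M d' h')|
      |cubicModel M d h (cubicMin M d h) - cubicModel M d h (cubicMin M (-d') h')| ≤
      2 * B / R ^ 2 * r ^ 2 := by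
  suffices key : ∀ α, d * α ≤ 0 → |α| = cubicMin M (-|d'|) h' →
      |cubicModel M d h (cubicMin M d h) - cubicModel M d h α| ≤ 2 * B / R ^ 2 * r ^ 2 by
    have habs : |cubicMin M d' h'| = cubicMin M (-|d'|) h' := abs_cubicMin hh'
    rcases le_total (d * cubicMin M d' h') 0 with hα | hα
    · exact (min_le_left _ _).trans (key _ hα habs)
    · refine (min_le_right _ _).trans (key _ ?_ ?_)
      · rw [cubicMin_neg]; linarith
      · rw [cubicMin_neg, abs_neg, habs]
  intro α hdα hα
  rw [abs_sub_comm, abs_of_nonneg (sub_nonneg.2 (cubicModel_cubicMin_le hM hh α)),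
    cubicModel_of_mul_nonpos hdα, cubicModel_of_mul_nonpos (mul_cubicMin_nonpos hh),
    abs_cubicMin hh, hα]
  refine cubicModel_cubicMin_sub_le_mul_sq hM (by simp) (by simp) hh hh' hr hrR hMB
    (by rwa [neg_sq, sq_abs]) ?_ hhh
  rw [neg_sub_neg]
  exact (abs_abs_sub_abs_le_abs_sub d d').trans (by rwa [abs_sub_comm])

end Scale

section Taylor

variable {g g' g'' : ℝ → ℝ}

theorem le_taylor_of_deriv2_le (hg : ∀ t, HasDerivAt g (g' t) t)
    (hg' : ∀ t, HasDerivAt g' (g'' t) t) {K c r : ℝ} (hr : 0 ≤ r)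
    (hb : ∀ t ∈ Set.Icc 0 r, g'' t ≤ K + c * t) :
    g r ≤ g 0 + g' 0 * r + K * r ^ 2 / 2 + c * r ^ 3 / 6 := by
  have hφ' (t : ℝ) : HasDerivAt (fun t => g' 0 + K * t + c * t ^ 2 / 2 - g' t)
      (K + c * t - g'' t) t := by
    have := ((((hasDerivAt_id t).const_mul K).const_add (g' 0)).add
      (((hasDerivAt_pow 2 t).const_mul c).div_const 2)).sub (hg' t)
    exact this.congr_deriv (by push_cast; ring)
  have hφ (t : ℝ) : HasDerivAt (fun t => g 0 + g' 0 * t + K * t ^ 2 / 2 + c * t ^ 3 / 6 - g t)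
      (g' 0 + K * t + c * t ^ 2 / 2 - g' t) t := by
    have := (((((hasDerivAt_id t).const_mul (g' 0)).const_add (g 0)).add
      (((hasDerivAt_pow 2 t).const_mul K).div_const 2)).add
      (((hasDerivAt_pow 3 t).const_mul c).div_const 6)).sub (hg t)
    exact this.congr_deriv (by push_cast; ring)
  have hmono {φ φ' : ℝ → ℝ} (hφ : ∀ t, HasDerivAt φ (φ' t) t)
      (hpos : ∀ t ∈ Set.Icc 0 r, 0 ≤ φ' t) : MonotoneOn φ (Set.Icc 0 r) :=
    monotoneOn_of_hasDerivWithinAt_nonneg (convex_Icc 0 r)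
      (fun t _ => (hφ t).continuousAt.continuousWithinAt) (fun t _ => (hφ t).hasDerivWithinAt)
      (fun t ht => hpos t (interior_subset ht))
  have hφ'_nonneg : ∀ t ∈ Set.Icc 0 r, 0 ≤ g' 0 + K * t + c * t ^ 2 / 2 - g' t := by
    intro t ht
    have := hmono hφ' (fun t ht => by linarith [hb t ht]) (Set.left_mem_Icc.2 hr) ht ht.1
    simpa using this
  have := hmono hφ hφ'_nonneg (Set.left_mem_Icc.2 hr) (Set.right_mem_Icc.2 hr) hr
  simp only at this
  linarith

theorem le_taylor_of_deriv2_le_abs (hg : ∀ t, HasDerivAt g (g' t) t)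
    (hg' : ∀ t, HasDerivAt g' (g'' t) t) {K c : ℝ} (hb : ∀ t, g'' t ≤ K + c * |t|)
    (ρ : ℝ) :
    g ρ ≤ g 0 + g' 0 * ρ + K * ρ ^ 2 / 2 + c * |ρ| ^ 3 / 6 := by
  rcases le_total 0 ρ with hρ | hρ
  · rw [abs_of_nonneg hρ]
    exact le_taylor_of_deriv2_le hg hg' hρ fun t ht => by simpa [abs_of_nonneg ht.1] using hb t
  · have hG (t : ℝ) : HasDerivAt (fun t => g (-t)) (-g' (-t)) t := by
      exact ((hg (-t)).comp t (hasDerivAt_neg t)).congr_deriv (by ring)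
    have hG' (t : ℝ) : HasDerivAt (fun t => -g' (-t)) (g'' (-t)) t := by
      exact ((hg' (-t)).comp t (hasDerivAt_neg t)).neg.congr_deriv (by ring)
    have := le_taylor_of_deriv2_le hG hG' (neg_nonneg.2 hρ) (K := K) (c := c)
      fun t ht => by simpa [abs_of_nonneg ht.1] using hb (-t)
    rw [abs_of_nonpos hρ]
    simp only [neg_neg, neg_zero] at this
    linarith

theorem abs_sub_taylor_le (hg : ∀ t, HasDerivAt g (g' t) t)
    (hg' : ∀ t, HasDerivAt g' (g'' t) t) {c : ℝ} (hb : ∀ t, |g'' t - g'' 0| ≤ c * |t|)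
    (ρ : ℝ) :
    |g ρ - (g 0 + g' 0 * ρ + g'' 0 * ρ ^ 2 / 2)| ≤ c * |ρ| ^ 3 / 6 := by
  have hup := le_taylor_of_deriv2_le_abs hg hg' (K := g'' 0) (c := c)
    (fun t => by linarith [(abs_le.1 (hb t)).2]) ρ
  have hlow := le_taylor_of_deriv2_le_abs (g := fun t => -g t) (g' := fun t => -g' t)
    (g'' := fun t => -g'' t) (K := -g'' 0) (c := c) (fun t => (hg t).neg) (fun t => (hg' t).neg)
    (fun t => by linarith [(abs_le.1 (hb t)).1]) ρ
  rw [abs_le]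
  constructor <;> linarith

theorem abs_centralDiff_sub_deriv_le (hg : ∀ t, HasDerivAt g (g' t) t)
    (hg' : ∀ t, HasDerivAt g' (g'' t) t) {c r : ℝ} (hb : ∀ t, |g'' t - g'' 0| ≤ c * |t|)
    (hr : 0 < r) : |(g r - g (-r)) / (2 * r) - g' 0| ≤ c * r ^ 2 / 6 := by
  have hp := abs_sub_taylor_le hg hg' hb r
  have hm := abs_sub_taylor_le hg hg' hb (-r)
  rw [abs_neg, abs_of_pos hr] at hm
  rw [abs_of_pos hr] at hp
  have hsplit : (g r - g (-r)) / (2 * r) - g' 0 =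
      ((g r - (g 0 + g' 0 * r + g'' 0 * r ^ 2 / 2)) -
        (g (-r) - (g 0 + g' 0 * -r + g'' 0 * (-r) ^ 2 / 2))) / (2 * r) := by
    field_simp
    ring
  rw [hsplit, abs_div, abs_of_pos (by positivity : 0 < 2 * r), div_le_iff₀ (by positivity)]
  linarith [abs_sub _ _ |>.trans (add_le_add hp hm)]

theorem abs_centralDiff2_sub_deriv2_le (hg : ∀ t, HasDerivAt g (g' t) t)
    (hg' : ∀ t, HasDerivAt g' (g'' t) t) {c r : ℝ} (hb : ∀ t, |g'' t - g'' 0| ≤ c * |t|)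
    (hr : 0 < r) : |(g r - 2 * g 0 + g (-r)) / r ^ 2 - g'' 0| ≤ c * r / 3 := by
  have hp := abs_sub_taylor_le hg hg' hb r
  have hm := abs_sub_taylor_le hg hg' hb (-r)
  rw [abs_neg, abs_of_pos hr] at hm
  rw [abs_of_pos hr] at hp
  have hsplit : (g r - 2 * g 0 + g (-r)) / r ^ 2 - g'' 0 =
      ((g r - (g 0 + g' 0 * r + g'' 0 * r ^ 2 / 2)) +
        (g (-r) - (g 0 + g' 0 * -r + g'' 0 * (-r) ^ 2 / 2))) / r ^ 2 := by
    field_simp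
    ring
  rw [hsplit, abs_div, abs_of_pos (by positivity : 0 < r ^ 2), div_le_iff₀ (by positivity)]
  linarith [abs_add_le _ _ |>.trans (add_le_add hp hm)]

theorem sq_deriv_le_of_deriv2_le (hg : ∀ t, HasDerivAt g (g' t) t)
    (hg' : ∀ t, HasDerivAt g' (g'' t) t) {L m : ℝ} (hL : 0 < L) (hb : ∀ t, g'' t ≤ L)
    (hm : ∀ t, m ≤ g t) : g' 0 ^ 2 ≤ 2 * L * (g 0 - m) := by
  have hstep :=
    le_taylor_of_deriv2_le_abs hg hg' (K := L) (c := 0) (by simpa using hb) (-g' 0 / L)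
  have hval : g 0 + g' 0 * (-g' 0 / L) + L * (-g' 0 / L) ^ 2 / 2 + 0 * |-g' 0 / L| ^ 3 / 6 =
      g 0 - g' 0 ^ 2 / (2 * L) := by
    field_simp
    ring
  have := (hm _).trans (hstep.trans_eq hval)
  exact (div_le_iff₀' (by positivity)).1 (by linarith)

end Taylor

section Line

variable {E : Type*} [NormedAddCommGroup E] [NormedSpace ℝ E] {f : E → ℝ}

theorem hasDerivAt_comp_line (hf : Differentiable ℝ f) (x u : E) (t : ℝ) :
    HasDerivAt (fun t : ℝ => f (x + t • u)) (fderiv ℝ f (x + t • u) u) t :=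
  (hf _).hasFDerivAt.comp_hasDerivAt t (((hasDerivAt_id t).smul_const u).const_add x |>.congr_deriv
    (one_smul ℝ u))

theorem hasDerivAt_fderiv_comp_line (hf : ContDiff ℝ 2 f) (x u : E) (t : ℝ) :
    HasDerivAt (fun t : ℝ => fderiv ℝ f (x + t • u) u)
      (iteratedFDeriv ℝ 2 f (x + t • u) ![u, u]) t := by
  have hf' : Differentiable ℝ (fderiv ℝ f) :=
    (hf.fderiv_right (m := 1) (by norm_num)).differentiable (by norm_num)
  have hline : HasDerivAt (fun t : ℝ => x + t • u) u t :=
    ((hasDerivAt_id t).smul_const u).const_add x |>.congr_deriv (one_smul ℝ u)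
  rw [iteratedFDeriv_two_apply]
  simpa using ((hf' _).hasFDerivAt.comp_hasDerivAt t hline).clm_apply (hasDerivAt_const t u)

theorem iteratedFDeriv_two_nonneg_of_convexOn (hconv : ConvexOn ℝ Set.univ f)
    (hf : ContDiff ℝ 2 f) (x u : E) : 0 ≤ iteratedFDeriv ℝ 2 f x ![u, u] := by
  have hg := hasDerivAt_comp_line (hf.differentiable (by norm_num)) x u
  have hconv' : ConvexOn ℝ Set.univ fun t : ℝ => f (x + t • u) := by
    have hline : (fun t : ℝ => f (x + t • u)) = f ∘ AffineMap.lineMap x (x + u) := by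
      ext t
      simp [AffineMap.lineMap_apply_module', add_comm]
    simpa only [hline, Set.preimage_univ] using hconv.comp_affineMap (AffineMap.lineMap x (x + u))
  have hmono : Monotone fun t : ℝ => fderiv ℝ f (x + t • u) u := by
    rw [← monotoneOn_univ]
    convert hconv'.monotoneOn_deriv fun t _ => (hg t).differentiableAt using 2 with t
    exact (hg t).deriv.symm
  simpa using hmono.deriv_nonneg.trans_eq (hasDerivAt_fderiv_comp_line hf x u 0).deriv

end Line

theorem sq_inner_gradient_le {E : Type*} [NormedAddCommGroup E] [InnerProductSpace ℝ E]
    [CompleteSpace E] {f : E → ℝ} (hf : ContDiff ℝ 2 f) {x u : E} {L m : ℝ} (hL : 0 < L)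
    (hsmooth : ∀ t : ℝ, iteratedFDeriv ℝ 2 f (x + t • u) ![u, u] ≤ L)
    (hm : ∀ y, m ≤ f y) :
    ⟪gradient f x, u⟫ ^ 2 ≤ 2 * L * (f x - m) := by
  simpa [inner_gradient_left] using sq_deriv_le_of_deriv2_le
    (hasDerivAt_comp_line (hf.differentiable (by norm_num)) x u)
    (hasDerivAt_fderiv_comp_line hf x u) hL hsmooth fun t => hm _

section FiniteDifference

variable {n : ℕ} {f : EuclideanSpace ℝ (Fin n) → ℝ} {x u : EuclideanSpace ℝ (Fin n)}
  {M r : ℝ}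

theorem abs_centralD_sub_fderiv_le (hf : ContDiff ℝ 2 f)
    (hlip : ∀ t : ℝ, |iteratedFDeriv ℝ 2 f (x + t • u) ![u, u] -
      iteratedFDeriv ℝ 2 f x ![u, u]| ≤ M * |t|) (hr : 0 < r) :
    |centralD f x u r - fderiv ℝ f x u| ≤ M * r ^ 2 / 6 := by
  simpa [centralD, neg_smul, ← sub_eq_add_neg] using abs_centralDiff_sub_deriv_le
    (hasDerivAt_comp_line (hf.differentiable (by norm_num)) x u)
    (hasDerivAt_fderiv_comp_line hf x u) (by simpa using hlip) hr

theorem abs_centralH_sub_le (hf : ContDiff ℝ 2 f)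
    (hlip : ∀ t : ℝ, |iteratedFDeriv ℝ 2 f (x + t • u) ![u, u] -
      iteratedFDeriv ℝ 2 f x ![u, u]| ≤ M * |t|) (hr : 0 < r) :
    |centralH f x u r - iteratedFDeriv ℝ 2 f x ![u, u]| ≤ M * r / 3 := by
  simpa [centralH, neg_smul, ← sub_eq_add_neg] using abs_centralDiff2_sub_deriv2_le
    (hasDerivAt_comp_line (hf.differentiable (by norm_num)) x u)
    (hasDerivAt_fderiv_comp_line hf x u) (by simpa using hlip) hr

theorem centralH_nonneg (hconv : ConvexOn ℝ Set.univ f) (x u : EuclideanSpace ℝ (Fin n))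
    (r : ℝ) : 0 ≤ centralH f x u r := by
  have hmid := hconv.2 (Set.mem_univ (x + r • u)) (Set.mem_univ (x - r • u))
    (by norm_num : (0 : ℝ) ≤ 1 / 2) (by norm_num : (0 : ℝ) ≤ 1 / 2) (by norm_num)
  rw [show (1 / 2 : ℝ) • (x + r • u) + (1 / 2 : ℝ) • (x - r • u) = x by module,
    smul_eq_mul, smul_eq_mul] at hmid
  exact div_nonneg (by linarith) (sq_nonneg r)

end FiniteDifference

theorem cubic_model_finite_difference_error_general (n : ℕ)
    (f : EuclideanSpace ℝ (Fin n) → ℝ)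
    (hconv : ConvexOn ℝ Set.univ f) (hf : ContDiff ℝ 2 f)
    (fstar : ℝ) (hmin : ∀ y, fstar ≤ f y)
    (L M : ℝ) (hL : 0 < L) (hM : 0 < M)
    (hsmooth : ∀ y v : EuclideanSpace ℝ (Fin n),
      iteratedFDeriv ℝ 2 f y ![v, v] ≤ L * ‖v‖ ^ 2)
    (hlip : ∀ y z v : EuclideanSpace ℝ (Fin n),
      |iteratedFDeriv ℝ 2 f y ![v, v] - iteratedFDeriv ℝ 2 f z ![v, v]| ≤
        M * ‖y - z‖ * ‖v‖ ^ 2)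
    (x u : EuclideanSpace ℝ (Fin n)) (hu : ‖u‖ = 1)
    (R : ℝ)
    (B : ℝ) (hB : B = max (max (L * R ^ 2) (M * R ^ 3)) (f x - fstar))
    (r : ℝ) (hr0 : 0 < r) (hrR : r ≤ R)
    (d₀ h₀ : ℝ) (hd₀ : d₀ = ⟪gradient f x, u⟫) (hh₀ : h₀ = iteratedFDeriv ℝ 2 f x ![u, u]) :
    min
      |cubicModel M d₀ h₀ (cubicMin M d₀ h₀) -
        cubicModel M d₀ h₀ (cubicMin M (centralD f x u r) (centralH f x u r))|
      |cubicModel M d₀ h₀ (cubicMin M d₀ h₀) -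
        cubicModel M d₀ h₀ (cubicMin M (-(centralD f x u r)) (centralH f x u r))| ≤
      2 * B / R ^ 2 * r ^ 2 := by
  have hlip' (t : ℝ) : |iteratedFDeriv ℝ 2 f (x + t • u) ![u, u] -
      iteratedFDeriv ℝ 2 f x ![u, u]| ≤ M * |t| := by
    simpa [norm_smul, hu] using hlip (x + t • u) x u
  have hsmooth' (t : ℝ) : iteratedFDeriv ℝ 2 f (x + t • u) ![u, u] ≤ L := by
    simpa [hu] using hsmooth (x + t • u) u
  have hLB : L * R ^ 2 ≤ B := hB ▸ (le_max_left _ _).trans (le_max_left _ _)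
  have hMB : M * R ^ 3 ≤ B := hB ▸ (le_max_right _ _).trans (le_max_left _ _)
  have hgapB : f x - fstar ≤ B := hB ▸ le_max_right _ _
  have hdB : d₀ ^ 2 * R ^ 2 ≤ 2 * B ^ 2 := by
    have hdesc := hd₀ ▸ sq_inner_gradient_le hf hL hsmooth' hmin
    nlinarith [mul_le_mul hLB hgapB (sub_nonneg.2 (hmin x)) (hLB.trans' (by positivity))]
  refine min_abs_cubicModel_sub_le hM (hh₀ ▸ iteratedFDeriv_two_nonneg_of_convexOn hconv hf x u)
    (centralH_nonneg hconv x u r) hr0 hrR hMB hdB ?_ (hh₀ ▸ abs_centralH_sub_le hf hlip' hr0)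
  rw [hd₀, inner_gradient_left]
  exact abs_centralD_sub_fderiv_le hf hlip' hr0

/-- (Finite-difference error bound for the minimum of the cubic model.)
For convex, `L`-smooth `f` with `M`-Lipschitz Hessian attaining its minimum `f⋆`, a unit vector
`u`, `0 < r ≤ R`, `B = max(LR², MR³, f(x) − f⋆)`, `d₀ = uᵀ∇f(x)`, `h₀ = uᵀ∇²f(x)u`,
`P(α) = d₀α + (h₀/2)α² + (M/6)|α|³` with global minimizer `α̂ = φ(d₀, h₀)`, and
`α⁺ = φ(d_r, h_r)`, `α⁻ = φ(−d_r, h_r)`, one has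
`min(|P(α̂) − P(α⁺)|, |P(α̂) − P(α⁻)|) ≤ (2B/R²)·r²`. -/
theorem cubic_model_finite_difference_error (n : ℕ)
    (f : EuclideanSpace ℝ (Fin n) → ℝ)
    (hconv : ConvexOn ℝ Set.univ f) (hf : ContDiff ℝ 2 f)
    (fstar : ℝ) (hmin : ∀ y, fstar ≤ f y) (hattain : ∃ y, f y = fstar)
    (L M : ℝ) (hL : 0 < L) (hM : 0 < M)
    (hsmooth : ∀ y v : EuclideanSpace ℝ (Fin n),
      iteratedFDeriv ℝ 2 f y ![v, v] ≤ L * ‖v‖ ^ 2)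
    (hlip : ∀ y z v : EuclideanSpace ℝ (Fin n),
      |iteratedFDeriv ℝ 2 f y ![v, v] - iteratedFDeriv ℝ 2 f z ![v, v]| ≤
        M * ‖y - z‖ * ‖v‖ ^ 2)
    (x u : EuclideanSpace ℝ (Fin n)) (hu : ‖u‖ = 1)
    (R : ℝ) (hR : 0 < R)
    (B : ℝ) (hB : B = max (max (L * R ^ 2) (M * R ^ 3)) (f x - fstar))
    (r : ℝ) (hr0 : 0 < r) (hrR : r ≤ R)
    (d₀ h₀ : ℝ) (hd₀ : d₀ = ⟪gradient f x, u⟫) (hh₀ : h₀ = iteratedFDeriv ℝ 2 f x ![u, u]) :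
    min
      |cubicModel M d₀ h₀ (cubicMin M d₀ h₀) -
        cubicModel M d₀ h₀ (cubicMin M (centralD f x u r) (centralH f x u r))|
      |cubicModel M d₀ h₀ (cubicMin M d₀ h₀) -
        cubicModel M d₀ h₀ (cubicMin M (-(centralD f x u r)) (centralH f x u r))| ≤
      2 * B / R ^ 2 * r ^ 2 :=
  cubic_model_finite_difference_error_general n f hconv hf fstar hmin L M hL hM hsmooth hlip x u hu
    R B hB r hr0 hrR d₀ h₀ hd₀ hh₀
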